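/- arXiv:2209.14802 — 2 statements merged into one kernel-verified Lean document; each statement's English description precedes it below -/
import Mathlib

section
/- Let L be a laminar family of subsets of V, let L ∈ L, and let S ⊆ V be a set such that S and L intersect. Then each of the four families I(S ∩ L, L), I(S ∪ L, L), I(S \ L, L), I(L \ S, L) is a proper subset of I(S, L). -/
/-- Two sets `X` and `Y` intersect if `X ∩ Y`, `X \ Y`, and `Y \ X` are all nonempty. -/
def Intersecting {V : Type*} (X Y : Set V) : Prop :=
  (X ∩ Y).Nonempty ∧ (X \ Y).Nonempty ∧ (Y \ X).Nonempty

/-- `I(S, 𝓛)` is the family of members of `𝓛` intersecting `S`. -/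
def ISet {V : Type*} (S : Set V) (𝓛 : Set (Set V)) : Set (Set V) :=
  {L ∈ 𝓛 | Intersecting S L}

lemma lam_trich {V : Type*} {A B : Set V} (h : ¬ Intersecting A B) :
    A ∩ B = ∅ ∨ A ⊆ B ∨ B ⊆ A := by
  unfold Intersecting at h
  push_neg at h
  by_cases h1 : (A ∩ B).Nonempty
  · by_cases h2 : (A \ B).Nonempty
    · right; right; rw [← Set.diff_eq_empty]
      exact h h1 h2
    · right; left; rw [← Set.diff_eq_empty]
      exact Set.not_nonempty_iff_eq_empty.mp h2
  · left; exact Set.not_nonempty_iff_eq_empty.mp h1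

/-- If `𝓛` is laminar, `L ∈ 𝓛`, and `S` intersects `L`, then each of
`I(S ∩ L, 𝓛)`, `I(S ∪ L, 𝓛)`, `I(S \ L, 𝓛)`, `I(L \ S, 𝓛)` is a proper subset of
`I(S, 𝓛)`. -/
theorem ISet_ssubset {V : Type*} (𝓛 : Set (Set V))
    (hlam : ∀ A ∈ 𝓛, ∀ B ∈ 𝓛, ¬ Intersecting A B)
    (L : Set V) (hL : L ∈ 𝓛) (S : Set V) (hSL : Intersecting S L) :
    ISet (S ∩ L) 𝓛 ⊂ ISet S 𝓛 ∧
    ISet (S ∪ L) 𝓛 ⊂ ISet S 𝓛 ∧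
    ISet (S \ L) 𝓛 ⊂ ISet S 𝓛 ∧
    ISet (L \ S) 𝓛 ⊂ ISet S 𝓛 := by
  obtain ⟨⟨a, haS, haL⟩, ⟨b, hbS, hbL⟩, ⟨c, hcL, hcS⟩⟩ := hSL
  have hLin : L ∈ ISet S 𝓛 := ⟨hL, ⟨a, haS, haL⟩, ⟨b, hbS, hbL⟩, ⟨c, hcL, hcS⟩⟩
  refine ⟨⟨?_, ?_⟩, ⟨?_, ?_⟩, ⟨?_, ?_⟩, ⟨?_, ?_⟩⟩
  -- I(S ∩ L) ⊆ I(S)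
  · rintro L' ⟨hL', ⟨x, ⟨hxS, hxL⟩, hxL'⟩, ⟨y, ⟨hyS, hyL⟩, hyL'⟩, ⟨z, hzL', hz⟩⟩
    refine ⟨hL', ⟨x, hxS, hxL'⟩, ⟨y, hyS, hyL'⟩, ?_⟩
    rcases lam_trich (hlam L hL L' hL') with hd | hsub | hsub
    · exact absurd (Set.mem_inter hxL hxL') (by rw [hd]; exact id)
    · exact ⟨c, hsub hcL, hcS⟩
    · exact ⟨z, hzL', fun hzS => hz ⟨hzS, hsub hzL'⟩⟩
  · intro hsub
    obtain ⟨_, _, ⟨x, ⟨_, hxL⟩, hxL'⟩, _⟩ := hsub hLin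
    exact hxL' hxL
  -- I(S ∪ L) ⊆ I(S)
  · rintro L' ⟨hL', ⟨x, hxSL, hxL'⟩, ⟨y, hySL, hyL'⟩, ⟨z, hzL', hz⟩⟩
    have hzS : z ∉ S := fun h => hz (Or.inl h)
    have hzL : z ∉ L := fun h => hz (Or.inr h)
    refine ⟨hL', ?_, ?_, ⟨z, hzL', hzS⟩⟩
    · rcases lam_trich (hlam L hL L' hL') with hd | hsub | hsub
      · rcases hxSL with h | h
        · exact ⟨x, h, hxL'⟩
        · exact absurd (Set.mem_inter h hxL') (by rw [hd]; exact id)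
      · exact ⟨a, haS, hsub haL⟩
      · exact absurd (hsub hzL') hzL
    · rcases lam_trich (hlam L hL L' hL') with hd | hsub | hsub
      · exact ⟨a, haS, fun h => Set.eq_empty_iff_forall_notMem.mp hd a ⟨haL, h⟩⟩
      · rcases hySL with h | h
        · exact ⟨y, h, hyL'⟩
        · exact absurd (hsub h) hyL'
      · exact absurd (hsub hzL') hzL
  · intro hsub
    obtain ⟨_, _, _, ⟨x, hxL', hx⟩⟩ := hsub hLin
    exact hx (Or.inr hxL')
  -- I(S \ L) ⊆ I(S)
  · rintro L' ⟨hL', ⟨x, ⟨hxS, hxL⟩, hxL'⟩, ⟨y, ⟨hyS, hyL⟩, hyL'⟩, ⟨z, hzL', hz⟩⟩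
    refine ⟨hL', ⟨x, hxS, hxL'⟩, ⟨y, hyS, hyL'⟩, ?_⟩
    rcases lam_trich (hlam L hL L' hL') with hd | hsub | hsub
    · exact ⟨z, hzL', fun hzS => hz ⟨hzS, fun hzL =>
        Set.eq_empty_iff_forall_notMem.mp hd z ⟨hzL, hzL'⟩⟩⟩
    · exact ⟨c, hsub hcL, hcS⟩
    · exact absurd (hsub hxL') hxL
  · intro hsub
    obtain ⟨_, ⟨x, ⟨_, hxL⟩, hxn⟩, _, _⟩ := hsub hLin
    exact hxL hxn
  -- I(L \ S) ⊆ I(S)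
  · rintro L' ⟨hL', ⟨x, ⟨hxL, hxS⟩, hxL'⟩, ⟨y, ⟨hyL, hyS⟩, hyL'⟩, ⟨z, hzL', hz⟩⟩
    rcases lam_trich (hlam L hL L' hL') with hd | hsub | hsub
    · exact absurd (Set.mem_inter hxL hxL') (by rw [hd]; exact id)
    · exact absurd (hsub hyL) hyL'
    · refine ⟨hL', ?_, ⟨b, hbS, fun h => hbL (hsub h)⟩, ⟨x, hxL', hxS⟩⟩
      have hzL : z ∈ L := hsub hzL'
      have hzS : z ∈ S := by by_contra h; exact hz ⟨hzL, h⟩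
      exact ⟨z, hzS, hzL'⟩
  · intro hsub
    obtain ⟨_, _, ⟨x, hx1, hx2⟩, _⟩ := hsub hLin
    exact hx2 hx1.1
end

section
/- Let c > 0 be strictly positive edge weights on a graph G with terminal set T, and let γ be the minimum c-weight of a T-Steiner cut. If δ(S₁) and δ(S₂) both attain this minimum γ, then either δ(S₁ ∩ S₂) and δ(S₁ ∪ S₂) both attain γ and the incidence vectors satisfy χ(δ(S₁)) + χ(δ(S₂)) = χ(δ(S₁ ∩ S₂)) + χ(δ(S₁ ∪ S₂)), or δ(S₁ \ S₂) and δ(S₂ \ S₁) both attain γ and χ(δ(S₁)) + χ(δ(S₂)) = χ(δ(S₁ \ S₂)) + χ(δ(S₂ \ S₁)). -/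
open Classical

/-- The edge `e` belongs to the cut `δ(S)`. -/
def InCut {V : Type*} (S : Set V) (e : Sym2 V) : Prop :=
  ∃ u v : V, e = s(u, v) ∧ u ∈ S ∧ v ∉ S

/-- `δ(S)` is a `T`-Steiner cut iff `T ∩ S ≠ ∅` and `T \ S ≠ ∅`. -/
def IsSteinerCut {V : Type*} (T S : Set V) : Prop :=
  (T ∩ S).Nonempty ∧ (T \ S).Nonempty

/-- The incidence vector of `δ(S)` in `ℝ^{E(G)}`. -/
noncomputable def chi {V : Type*} (G : SimpleGraph V) (S : Set V) : ↥G.edgeSet → ℝ :=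
  fun e => if InCut S e.val then 1 else 0

/-- The `c`-weight of the cut `δ(S)` in `G`. -/
noncomputable def cutWeight {V : Type*} [Fintype V] [DecidableEq V] (G : SimpleGraph V)
    (c : Sym2 V → ℝ) (S : Set V) : ℝ :=
  ∑ e ∈ G.edgeFinset, if InCut S e then c e else 0

/-- Real-valued indicator of `e ∈ δ(S)`. -/
noncomputable def indic {V : Type*} (S : Set V) (e : Sym2 V) : ℝ :=
  if InCut S e then 1 else 0

lemma inCut_iff {V : Type*} (S : Set V) (a b : V) :
    InCut S s(a,b) ↔ (a ∈ S ∧ b ∉ S) ∨ (b ∈ S ∧ a ∉ S) := by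
  constructor
  · rintro ⟨u, v, he, hu, hv⟩
    rw [Sym2.eq_iff] at he
    rcases he with ⟨rfl, rfl⟩ | ⟨rfl, rfl⟩ <;> tauto
  · rintro (⟨h1, h2⟩ | ⟨h1, h2⟩)
    exacts [⟨a, b, rfl, h1, h2⟩, ⟨b, a, Sym2.eq_swap.symm, h1, h2⟩]

lemma pt_inter_union {V : Type*} (S₁ S₂ : Set V) (e : Sym2 V) :
    indic (S₁ ∩ S₂) e + indic (S₁ ∪ S₂) e ≤ indic S₁ e + indic S₂ e := by
  induction e using Sym2.ind with
  | _ a b =>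
    simp only [indic, inCut_iff, Set.mem_inter_iff, Set.mem_union]
    by_cases h1 : a ∈ S₁ <;> by_cases h2 : a ∈ S₂ <;> by_cases h3 : b ∈ S₁ <;>
      by_cases h4 : b ∈ S₂ <;> simp [h1, h2, h3, h4]

lemma pt_diff {V : Type*} (S₁ S₂ : Set V) (e : Sym2 V) :
    indic (S₁ \ S₂) e + indic (S₂ \ S₁) e ≤ indic S₁ e + indic S₂ e := by
  induction e using Sym2.ind with
  | _ a b =>
    simp only [indic, inCut_iff, Set.mem_diff]
    by_cases h1 : a ∈ S₁ <;> by_cases h2 : a ∈ S₂ <;> by_cases h3 : b ∈ S₁ <;>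
      by_cases h4 : b ∈ S₂ <;> simp [h1, h2, h3, h4]

lemma cutWeight_eq {V : Type*} [Fintype V] [DecidableEq V] (G : SimpleGraph V)
    (c : Sym2 V → ℝ) (S : Set V) :
    cutWeight G c S = ∑ e ∈ G.edgeFinset, indic S e * c e := by
  unfold cutWeight indic
  refine Finset.sum_congr rfl fun e _ => ?_
  split_ifs <;> ring

lemma key_uncross {V : Type*} [Fintype V] [DecidableEq V] (G : SimpleGraph V)
    (c : Sym2 V → ℝ) (hpos : ∀ e ∈ G.edgeSet, 0 < c e) (γ : ℝ) (P Q A B : Set V)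
    (hpt : ∀ e : Sym2 V, indic A e + indic B e ≤ indic P e + indic Q e)
    (hA : γ ≤ cutWeight G c A) (hB : γ ≤ cutWeight G c B)
    (hP : cutWeight G c P = γ) (hQ : cutWeight G c Q = γ) :
    cutWeight G c A = γ ∧ cutWeight G c B = γ ∧
      chi G P + chi G Q = chi G A + chi G B := by
  have hsum : cutWeight G c A + cutWeight G c B ≤ cutWeight G c P + cutWeight G c Q := by
    simp only [cutWeight_eq, ← Finset.sum_add_distrib]
    refine Finset.sum_le_sum fun e he => ?_
    have hc := hpos e (SimpleGraph.mem_edgeFinset.mp he)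
    nlinarith [hpt e]
  have hAγ : cutWeight G c A = γ := by linarith
  have hBγ : cutWeight G c B = γ := by linarith
  refine ⟨hAγ, hBγ, ?_⟩
  have hz : ∀ e ∈ G.edgeFinset,
      (indic P e + indic Q e - indic A e - indic B e) * c e = 0 := by
    have hnn : ∀ e ∈ G.edgeFinset,
        0 ≤ (indic P e + indic Q e - indic A e - indic B e) * c e := fun e he => by
      have hc := hpos e (SimpleGraph.mem_edgeFinset.mp he)
      nlinarith [hpt e]
    have hs : ∑ e ∈ G.edgeFinset,
        (indic P e + indic Q e - indic A e - indic B e) * c e = 0 := by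
      have : ∑ e ∈ G.edgeFinset, (indic P e + indic Q e - indic A e - indic B e) * c e
          = cutWeight G c P + cutWeight G c Q - cutWeight G c A - cutWeight G c B := by
        simp only [cutWeight_eq, ← Finset.sum_add_distrib, ← Finset.sum_sub_distrib]
        refine Finset.sum_congr rfl fun e _ => by ring
      rw [this]; linarith
    exact (Finset.sum_eq_zero_iff_of_nonneg hnn).mp hs
  funext e
  have he : e.val ∈ G.edgeFinset := SimpleGraph.mem_edgeFinset.mpr e.property
  have hc := hpos e.val e.property
  have := hz e.val he
  have hd : indic P e.val + indic Q e.val - indic A e.val - indic B e.val = 0 := by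
    rcases mul_eq_zero.mp this with h | h
    · exact h
    · exact absurd h (ne_of_gt hc)
  show chi G P e + chi G Q e = chi G A e + chi G B e
  simp only [chi]
  have hind : ∀ S : Set V, (if InCut S e.val then (1:ℝ) else 0) = indic S e.val := fun _ => rfl
  rw [hind, hind, hind, hind]; linarith

/-- Uncrossing of roots: if `δ(S₁)` and `δ(S₂)` are `T`-Steiner cuts attaining the
minimum weight `γ` of the strictly positive weights `c`, then either `δ(S₁ ∩ S₂)` and
`δ(S₁ ∪ S₂)` both attain `γ` and
`χ(δ(S₁)) + χ(δ(S₂)) = χ(δ(S₁ ∩ S₂)) + χ(δ(S₁ ∪ S₂))`, or `δ(S₁ \ S₂)` and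
`δ(S₂ \ S₁)` both attain `γ` and
`χ(δ(S₁)) + χ(δ(S₂)) = χ(δ(S₁ \ S₂)) + χ(δ(S₂ \ S₁))`. -/
theorem root_uncrossing {V : Type*} [Fintype V] [DecidableEq V]
    (G : SimpleGraph V) (T : Set V) (c : Sym2 V → ℝ)
    (hpos : ∀ e ∈ G.edgeSet, 0 < c e) (γ : ℝ)
    (hγ : ∀ S : Set V, IsSteinerCut T S → γ ≤ cutWeight G c S)
    (S₁ S₂ : Set V)
    (h₁ : IsSteinerCut T S₁) (h₁γ : cutWeight G c S₁ = γ)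
    (h₂ : IsSteinerCut T S₂) (h₂γ : cutWeight G c S₂ = γ) :
    (IsSteinerCut T (S₁ ∩ S₂) ∧ cutWeight G c (S₁ ∩ S₂) = γ ∧
     IsSteinerCut T (S₁ ∪ S₂) ∧ cutWeight G c (S₁ ∪ S₂) = γ ∧
     chi G S₁ + chi G S₂ = chi G (S₁ ∩ S₂) + chi G (S₁ ∪ S₂)) ∨
    (IsSteinerCut T (S₁ \ S₂) ∧ cutWeight G c (S₁ \ S₂) = γ ∧
     IsSteinerCut T (S₂ \ S₁) ∧ cutWeight G c (S₂ \ S₁) = γ ∧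
     chi G S₁ + chi G S₂ = chi G (S₁ \ S₂) + chi G (S₂ \ S₁)) := by
  obtain ⟨x₁, hx₁T, hx₁⟩ := h₁.1
  obtain ⟨y₁, hy₁T, hy₁⟩ := h₁.2
  obtain ⟨x₂, hx₂T, hx₂⟩ := h₂.1
  obtain ⟨y₂, hy₂T, hy₂⟩ := h₂.2
  by_cases hcase : (T ∩ (S₁ ∩ S₂)).Nonempty ∧ (T \ (S₁ ∪ S₂)).Nonempty
  · left
    have hsi : IsSteinerCut T (S₁ ∩ S₂) :=
      ⟨hcase.1, ⟨y₁, hy₁T, fun h => hy₁ h.1⟩⟩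
    have hsu : IsSteinerCut T (S₁ ∪ S₂) :=
      ⟨⟨x₁, hx₁T, Or.inl hx₁⟩, hcase.2⟩
    obtain ⟨w1, w2, w3⟩ := key_uncross G c hpos γ S₁ S₂ (S₁ ∩ S₂) (S₁ ∪ S₂)
      (fun e => pt_inter_union S₁ S₂ e) (hγ _ hsi) (hγ _ hsu) h₁γ h₂γ
    exact ⟨hsi, w1, hsu, w2, w3⟩
  · right
    rw [not_and_or, Set.not_nonempty_iff_eq_empty, Set.not_nonempty_iff_eq_empty] at hcase
    have hsd1 : IsSteinerCut T (S₁ \ S₂) := by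
      rcases hcase with h | h
      · refine ⟨⟨x₁, hx₁T, hx₁, fun hx => ?_⟩, ⟨x₂, hx₂T, fun hx => hx.2 hx₂⟩⟩
        exact Set.eq_empty_iff_forall_notMem.mp h x₁ ⟨hx₁T, hx₁, hx⟩
      · have hy₂' : y₂ ∈ S₁ := by
          have := Set.eq_empty_iff_forall_notMem.mp h y₂
          by_contra hc
          exact this ⟨hy₂T, fun hu => hu.elim hc hy₂⟩
        exact ⟨⟨y₂, hy₂T, hy₂', hy₂⟩, ⟨x₂, hx₂T, fun hx => hx.2 hx₂⟩⟩
    have hsd2 : IsSteinerCut T (S₂ \ S₁) := by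
      rcases hcase with h | h
      · refine ⟨⟨x₂, hx₂T, hx₂, fun hx => ?_⟩, ⟨x₁, hx₁T, fun hx => hx.2 hx₁⟩⟩
        exact Set.eq_empty_iff_forall_notMem.mp h x₂ ⟨hx₂T, hx, hx₂⟩
      · have hy₁' : y₁ ∈ S₂ := by
          have := Set.eq_empty_iff_forall_notMem.mp h y₁
          by_contra hc
          exact this ⟨hy₁T, fun hu => hu.elim hy₁ hc⟩
        exact ⟨⟨y₁, hy₁T, hy₁', hy₁⟩, ⟨x₁, hx₁T, fun hx => hx.2 hx₁⟩⟩
    obtain ⟨w1, w2, w3⟩ := key_uncross G c hpos γ S₁ S₂ (S₁ \ S₂) (S₂ \ S₁)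
      (fun e => pt_diff S₁ S₂ e) (hγ _ hsd1) (hγ _ hsd2) h₁γ h₂γ
    exact ⟨hsd1, w1, hsd2, w2, w3⟩
end
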